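/- arXiv:0808.3415 — 6 statements merged into one kernel-verified Lean document; each statement's English description precedes it below -/
import Mathlib

section
/- Fractalness: Let f = φ_{s_n} ∘ ⋯ ∘ φ_{s_1} and v a word over S. Define f_v by f(v ++ w) = f(v) ++ f_v(w) for all w. Then f_v = φ_{t_n} ∘ ⋯ ∘ φ_{t_1}, where t_i is the last letter of φ_{s_i}∘⋯∘φ_{s_1}(v). In particular f_v lies in the semigroup generated by {φ_s : s ∈ S}. -/
/-- φ_s([a_1,...,a_n]) = [s a_1, s a_1 a_2, ..., s a_1 ⋯ a_n] -/
def phi {S : Type*} [Mul S] (s : S) (l : List S) : List S :=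
  (l.scanl (· * ·) s).tail

/-- `applyChain [s₁,...,sₙ] v = (φ_{sₙ} ∘ ⋯ ∘ φ_{s₁}) v`. -/
def applyChain {M : Type*} [Monoid M] (ss : List M) (v : List M) : List M :=
  ss.foldl (fun w s => phi s w) v

lemma phi_cons {S : Type*} [Mul S] (s a : S) (l : List S) :
    phi s (a :: l) = (s * a) :: phi (s * a) l := by
  cases l <;> simp [phi, List.scanl]

lemma phi_ne_nil {S : Type*} [Mul S] (s : S) {l : List S} (h : l ≠ []) :
    phi s l ≠ [] := by
  cases l with
  | nil => exact absurd rfl h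
  | cons a l => rw [phi_cons]; simp

lemma phi_append {S : Type*} [Mul S] (s : S) (v w : List S) :
    phi s (v ++ w) = phi s v ++ phi ((phi s v).getLastD s) w := by
  induction v generalizing s with
  | nil => simp [phi]
  | cons a v ih =>
    rw [List.cons_append, phi_cons, ih (s * a), phi_cons, List.getLastD_cons,
      List.cons_append]

lemma fractalness_aux {M : Type*} [Monoid M] (ss : List M)
    (v : List M) (hv : v ≠ []) (w : List M) :
    applyChain ss (v ++ w) =
      applyChain ss v ++
        applyChain ((List.range ss.length).map fun i =>
          (applyChain (ss.take (i + 1)) v).getLastD 1) w := by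
  induction ss generalizing v w with
  | nil => simp [applyChain]
  | cons s ss ih =>
    have hv' : phi s v ≠ [] := phi_ne_nil s hv
    have hgl : (phi s v).getLastD s = (phi s v).getLastD 1 := by
      cases h : phi s v with
      | nil => exact absurd h hv'
      | cons a l => rw [List.getLastD_cons, List.getLastD_cons]
    have h1 : applyChain (s :: ss) (v ++ w) = applyChain ss (phi s (v ++ w)) := rfl
    rw [h1, phi_append, hgl, ih (phi s v) hv']
    have h2 : ∀ u, applyChain (s :: ss) u = applyChain ss (phi s u) := fun _ => rfl
    congr 1
    rw [List.length_cons, List.range_succ_eq_map, List.map_cons, List.map_map]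
    have h3 : applyChain [s] v = phi s v := rfl
    simp only [List.take, applyChain, List.foldl_cons]
    rfl

/-- Fractalness: for f = φ_{sₙ} ∘ ⋯ ∘ φ_{s₁} and a nonempty word v, the section
f_v (defined by f(v ++ w) = f(v) ++ f_v(w)) equals φ_{tₙ} ∘ ⋯ ∘ φ_{t₁} where
t_i is the last letter of (φ_{s_i} ∘ ⋯ ∘ φ_{s₁})(v).  In particular f_v lies in
the semigroup generated by the φ's. -/
theorem fractalness {M : Type*} [Monoid M] (ss : List M) (hss : ss ≠ [])
    (v : List M) (hv : v ≠ []) (w : List M) :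
    applyChain ss (v ++ w) =
      applyChain ss v ++
        applyChain ((List.range ss.length).map fun i =>
          (applyChain (ss.take (i + 1)) v).getLastD 1) w := by
  exact fractalness_aux ss v hv w
end

section
/- If F : S → T is a surjective semigroup homomorphism, then the induced map φ_s ↦ φ_{F(s)} extends to a well-defined surjective semigroup homomorphism Cayley(S) → Cayley(T). -/
/-- Cayley(S): the subsemigroup of functions on words over S¹ = WithOne S
(under composition) generated by the maps φ_s, s ∈ S. -/
def Cayley (S : Type*) [Semigroup S] : Subsemigroup (Function.End (List (WithOne S))) :=
  Subsemigroup.closure {f | ∃ s : S, f = phi (s : WithOne S)}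

/-!
Write `π = List.map F̂` for the extension `F̂ : S¹ → T¹` of `F`; since `F` is surjective, so is `π`.
As `F̂` is multiplicative, `φ_{F s} ∘ π = π ∘ φ_s`. Hence every element of the subsemigroup `C` of
`End(List S¹) × End(List T¹)` generated by the pairs `(φ_s, φ_{F s})` is a pair `(f, g)` with
`g ∘ π = π ∘ f`, and surjectivity of `π` makes `g` a function of `f`. So the first projection is
an isomorphism from `C` onto `Cayley(S)`, and composing its inverse with the second projection,
which maps `C` onto `Cayley(T)`, gives the required homomorphism.
-/

open Function

theorem WithOne.mapMulHom_surjective {α β : Type*} [Mul α] [Mul β] {f : α →ₙ* β}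
    (hf : Surjective f) : Surjective (WithOne.mapMulHom f)
  | 1 => ⟨1, map_one _⟩
  | (b : β) => let ⟨a, ha⟩ := hf b; ⟨a, by rw [mapMulHom_coe, ha]⟩

theorem List.map_scanl_mul {M N F : Type*} [Mul M] [Mul N] [FunLike F M N] [MulHomClass F M N]
    (f : F) (a : M) (l : List M) :
    (l.scanl (· * ·) a).map f = (l.map f).scanl (· * ·) (f a) := by
  induction l generalizing a with
  | nil => rfl
  | cons x l ih => simp only [List.scanl_cons, List.map_cons, ih, map_mul]

theorem map_phi {M N F : Type*} [Mul M] [Mul N] [FunLike F M N] [MulHomClass F M N] (f : F)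
    (a : M) (l : List M) : (phi a l).map f = phi (f a) (l.map f) := by
  rw [phi, phi, List.map_tail, List.map_scanl_mul]

section SemiconjPairs

variable {α β : Type*} (π : α → β)

def semiconjPairs : Subsemigroup (Function.End α × Function.End β) where
  carrier := {p | Semiconj π p.1 p.2}
  mul_mem' {p q} (hp : Semiconj π p.1 p.2) (hq : Semiconj π q.1 q.2) := hp.comp_right hq

theorem injOn_fst_semiconjPairs (hπ : Surjective π) :
    Set.InjOn Prod.fst (semiconjPairs π : Set (Function.End α × Function.End β)) := by
  rintro ⟨f, g⟩ (hp : Semiconj π f g) ⟨f', g'⟩ (hq : Semiconj π f' g') (rfl : f = f')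
  refine Prod.ext rfl (funext fun y => ?_)
  obtain ⟨x, rfl⟩ := hπ y
  exact (hp x).symm.trans (hq x)

end SemiconjPairs

theorem Subsemigroup.exists_surjective_mulHom_of_injOn_fst {M N : Type*} [Mul M] [Mul N]
    {C : Subsemigroup (M × N)} (hC : Set.InjOn Prod.fst (C : Set (M × N)))
    {A : Subsemigroup M} {B : Subsemigroup N}
    (hA : C.map (MulHom.fst M N) = A) (hB : C.map (MulHom.snd M N) = B) :
    ∃ Φ : A →ₙ* B, Surjective Φ ∧ ∀ p ∈ C, ∀ h : p.1 ∈ A, (Φ ⟨p.1, h⟩ : N) = p.2 := by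
  subst hA hB
  have hfst : Bijective ((MulHom.fst M N).subsemigroupMap C) :=
    ⟨fun p q hpq => Subtype.ext (hC p.2 q.2 (congrArg Subtype.val hpq)),
      MulHom.subsemigroupMap_surjective _ _⟩
  let e := MulEquiv.ofBijective _ hfst
  refine ⟨((MulHom.snd M N).subsemigroupMap C).comp e.symm.toMulHom,
    (MulHom.subsemigroupMap_surjective _ _).comp e.symm.surjective, fun p hp h => ?_⟩
  have : e.symm ⟨p.1, h⟩ = ⟨p, hp⟩ := e.symm_apply_eq.mpr rfl
  change ((e.symm ⟨p.1, h⟩ : C) : M × N).2 = p.2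
  rw [this]

/-- A surjective semigroup morphism F : S → T induces a well-defined surjective
semigroup morphism Cayley(S) → Cayley(T) sending φ_s to φ_{F(s)}. -/
theorem cayley_quotient {S T : Type*} [Semigroup S] [Semigroup T]
    (F : S →ₙ* T) (hF : Function.Surjective F) :
    ∃ Φ : Cayley S →ₙ* Cayley T, Function.Surjective Φ ∧
      ∀ s : S, Φ ⟨phi (s : WithOne S), Subsemigroup.subset_closure ⟨s, rfl⟩⟩ =
        ⟨phi (F s : WithOne T), Subsemigroup.subset_closure ⟨F s, rfl⟩⟩ := by
  let F₁ := WithOne.mapMulHom F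
  let gen : S → Function.End (List (WithOne S)) × Function.End (List (WithOne T)) :=
    fun s => (phi (s : WithOne S), phi (F s : WithOne T))
  have hgen : ∀ s, gen s ∈ semiconjPairs (List.map F₁) := fun s l => map_phi F₁ (s : WithOne S) l
  have hC : Set.InjOn Prod.fst (Subsemigroup.closure (Set.range gen) : Set _) :=
    (injOn_fst_semiconjPairs _ ((WithOne.mapMulHom_surjective hF).list_map)).mono
      (Subsemigroup.closure_le.mpr (Set.range_subset_iff.mpr hgen))
  have hA : (Subsemigroup.closure (Set.range gen)).map (MulHom.fst _ _) = Cayley S := by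
    rw [MulHom.map_mclosure, ← Set.range_comp, Cayley]
    congr 1
    ext f
    exact exists_congr fun _ => eq_comm
  have hB : (Subsemigroup.closure (Set.range gen)).map (MulHom.snd _ _) = Cayley T := by
    rw [MulHom.map_mclosure, ← Set.range_comp, Cayley]
    congr 1
    ext f
    rw [Set.mem_ofPred_eq, hF.exists]
    exact exists_congr fun _ => eq_comm
  obtain ⟨Φ, hΦ, hgraph⟩ := Subsemigroup.exists_surjective_mulHom_of_injOn_fst hC hA hB
  exact ⟨Φ, hΦ, fun s => Subtype.ext (hgraph (gen s) (Subsemigroup.subset_closure ⟨s, rfl⟩) _)⟩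
end

section
/- Let S be a finite aperiodic monoid with identity 1. The following are equivalent: (i) φ_1 is idempotent in Cayley(S); (ii) φ_1 is a regular element of Cayley(S) (there exists f with φ_1 f φ_1 = φ_1); (iii) S is an idempotent monoid. -/
/-- Cayley(M) for a monoid M: the subsemigroup of functions on words over M
(under composition) generated by the maps φ_s, s ∈ M. -/
def CayleyM (M : Type*) [Monoid M] : Subsemigroup (Function.End (List M)) :=
  Subsemigroup.closure {f | ∃ s : M, f = phi s}

/-- φ_1 as an element of the composition monoid of functions on words. -/
def phiOne (M : Type*) [Monoid M] : Function.End (List M) := phi (1 : M)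

section Aux

lemma scanl_eq_cons {α β : Type*} (f : β → α → β) (b : β) (l : List α) :
    List.scanl f b l = b :: (List.scanl f b l).tail := by
  cases l <;> simp [List.scanl]

lemma phi_singleton {S : Type*} [Mul S] (s a : S) : phi s [a] = [s * a] := by
  rw [phi_cons]; rfl

variable {M : Type*} [Monoid M]

lemma phiOne_apply_pair (x y : M) : (phiOne M) [x, y] = [x, x * y] := by
  show phi (1 : M) [x, y] = _
  rw [phi_cons, phi_singleton]
  simp

lemma phiOne_pow_pair (x : M) : ∀ (n : ℕ) (y : M), ((phiOne M) ^ n) [x, y] = [x, x ^ n * y] := by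
  intro n
  induction n with
  | zero => intro y; rw [pow_zero, pow_zero, one_mul]; rfl
  | succ n ih =>
    intro y
    have h : ((phiOne M) ^ (n + 1)) [x, y] = ((phiOne M) ^ n) ((phiOne M) [x, y]) := by
      rw [pow_succ]; rfl
    rw [h, phiOne_apply_pair, ih (x * y), ← mul_assoc, ← pow_succ]

/-- In a finite aperiodic monoid, s * t = 1 implies s = 1 and t = 1. -/
lemma aperiodic_mul_eq_one (haper : ∀ s : M, ∃ n : ℕ, s ^ n = s ^ (n + 1))
    {s t : M} (h : s * t = 1) : s = 1 ∧ t = 1 := by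
  obtain ⟨n, hn⟩ := haper s
  have key : ∀ m : ℕ, s ^ m * t ^ m = 1 := by
    intro m
    induction m with
    | zero => simp
    | succ m ih =>
      rw [pow_succ, pow_succ']
      rw [mul_assoc]
      rw [← mul_assoc s t, h, one_mul, ih]
  have hs : s = 1 := by
    have := key n
    calc s = s * 1 := (mul_one s).symm
    _ = s * (s ^ n * t ^ n) := by rw [this]
    _ = s ^ (n + 1) * t ^ n := by rw [← mul_assoc, ← pow_succ']
    _ = s ^ n * t ^ n := by rw [← hn]
    _ = 1 := key n
  refine ⟨hs, ?_⟩
  calc t = 1 * t := (one_mul t).symm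
  _ = s * t := by rw [hs]
  _ = 1 := h

/-- In a finite aperiodic monoid, x^m = x with 2 ≤ m implies x * x = x. -/
lemma aperiodic_pow_eq_self (haper : ∀ s : M, ∃ n : ℕ, s ^ n = s ^ (n + 1))
    {x : M} {m : ℕ} (hm : 2 ≤ m) (h : x ^ m = x) : x * x = x := by
  obtain ⟨N, hN⟩ := haper x
  have stab : ∀ k : ℕ, x ^ (N + k) = x ^ N := by
    intro k
    induction k with
    | zero => rfl
    | succ k ih =>
      have : N + (k + 1) = (N + k) + 1 := by ring
      rw [this, pow_succ, ih, ← pow_succ, ← hN]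
  have iter : ∀ j : ℕ, x ^ (m + (m - 1) * j) = x := by
    intro j
    induction j with
    | zero => simpa using h
    | succ j ih =>
      have hsplit : m + (m - 1) * (j + 1) = (m + (m - 1) * j) + (m - 1) := by ring
      rw [hsplit, pow_add, ih]
      have : x * x ^ (m - 1) = x ^ m := by
        rw [← pow_succ']
        congr 1
        omega
      rw [this, h]
  set n := m + (m - 1) * N with hn
  have hge : N ≤ n := by
    have : 1 ≤ m - 1 := by omega
    calc N ≤ (m - 1) * N := Nat.le_mul_of_pos_left N (by omega)
    _ ≤ n := by omega
  have hxn : x ^ n = x := iter N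
  have hxn1 : x ^ (n + 1) = x := by
    obtain ⟨k, hk⟩ : ∃ k, n = N + k := ⟨n - N, by omega⟩
    have e1 : x ^ n = x ^ N := by rw [hk]; exact stab k
    have e2 : x ^ (n + 1) = x ^ N := by
      have : n + 1 = N + (k + 1) := by omega
      rw [this]; exact stab (k + 1)
    rw [e2, ← e1, hxn]
  calc x * x = x ^ n * x := by rw [hxn]
  _ = x ^ (n + 1) := by rw [pow_succ]
  _ = x := hxn1

/-- If M is an idempotent monoid, then φ_u ∘ φ_s = φ_s whenever u * s = s. -/
lemma phi_comp_idem (hid : ∀ x : M, x * x = x) :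
    ∀ (l : List M) (u s : M), u * s = s → phi u (phi s l) = phi s l := by
  intro l
  induction l with
  | nil => intro u s _; rfl
  | cons a l ih =>
    intro u s hus
    rw [phi_cons, phi_cons, ← mul_assoc, hus]
    congr 1
    exact ih (s * a) (s * a) (hid (s * a))

lemma cayley_structure (haper : ∀ s : M, ∃ n : ℕ, s ^ n = s ^ (n + 1))
    {f : Function.End (List M)} (hf : f ∈ CayleyM M) :
    ∃ t : M, (∀ a : M, f [a] = [t * a]) ∧
      (t = 1 → ∃ k : ℕ, 0 < k ∧ f = (phiOne M) ^ k) := by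
  induction hf using Subsemigroup.closure_induction with
  | mem g hg =>
    obtain ⟨s, rfl⟩ := hg
    refine ⟨s, fun a => phi_singleton s a, fun hs => ⟨1, one_pos, ?_⟩⟩
    rw [pow_one, hs]; rfl
  | mul g₁ g₂ _ _ ih₁ ih₂ =>
    obtain ⟨t₁, h₁, k₁⟩ := ih₁
    obtain ⟨t₂, h₂, k₂⟩ := ih₂
    refine ⟨t₁ * t₂, fun a => ?_, fun ht => ?_⟩
    · show g₁ (g₂ [a]) = _
      rw [h₂, h₁, mul_assoc]
    · obtain ⟨ht₁, ht₂⟩ := aperiodic_mul_eq_one haper ht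
      obtain ⟨n₁, hn₁, e₁⟩ := k₁ ht₁
      obtain ⟨n₂, hn₂, e₂⟩ := k₂ ht₂
      exact ⟨n₁ + n₂, by omega, by rw [e₁, e₂, pow_add]⟩

lemma idem_of_regular (haper : ∀ s : M, ∃ n : ℕ, s ^ n = s ^ (n + 1))
    (h : ∃ f ∈ CayleyM M, phiOne M * f * phiOne M = phiOne M) :
    ∀ x : M, x * x = x := by
  obtain ⟨f, hf, hreg⟩ := h
  obtain ⟨t, ht, hpow⟩ := cayley_structure haper hf
  -- φ_1 [a] = [a]
  have hone : ∀ a : M, (phiOne M) [a] = [a] := by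
    intro a
    show phi (1 : M) [a] = [a]
    rw [phi_singleton, one_mul]
  -- evaluate the regularity equation at [1] to get t = 1
  have ht1 : t = 1 := by
    have h : (phiOne M) (f ((phiOne M) [(1 : M)])) = (phiOne M) [(1 : M)] :=
      congrFun hreg [(1 : M)]
    rw [hone] at h
    rw [ht, hone] at h
    simpa using h
  obtain ⟨k, hk, rfl⟩ := hpow ht1
  -- now φ_1^(k+2) = φ_1
  have hpow2 : (phiOne M) ^ (k + 2) = phiOne M := by
    have hk2 : k + 2 = (1 + k) + 1 := by omega
    rw [hk2, pow_succ, pow_add, pow_one]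
    exact hreg
  intro x
  have e1 := congrFun hpow2 [x, (1 : M)]
  rw [phiOne_pow_pair x (k + 2) 1, phiOne_apply_pair, mul_one, mul_one] at e1
  have hx : x ^ (k + 2) = x := by
    have := List.tail_eq_of_cons_eq e1
    have := List.head_eq_of_cons_eq this
    exact this
  exact aperiodic_pow_eq_self haper (by omega) hx

end Aux

/-- For a finite aperiodic monoid M, the following are equivalent:
(i) φ_1 is idempotent; (ii) φ_1 is a regular element of Cayley(M);
(iii) M is an idempotent monoid. -/
theorem phi_one_idempotent_tfae {M : Type*} [Monoid M] [Fintype M]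
    (haper : ∀ s : M, ∃ n : ℕ, s ^ n = s ^ (n + 1)) :
    (phiOne M * phiOne M = phiOne M ↔
        ∃ f ∈ CayleyM M, phiOne M * f * phiOne M = phiOne M) ∧
      (phiOne M * phiOne M = phiOne M ↔ ∀ x : M, x * x = x) := by
  have hmem : phiOne M ∈ CayleyM M :=
    Subsemigroup.subset_closure ⟨1, rfl⟩
  have idem_of_id : (∀ x : M, x * x = x) → phiOne M * phiOne M = phiOne M := by
    intro hid
    funext l
    show phi (1 : M) (phi (1 : M) l) = phi (1 : M) l
    exact phi_comp_idem hid l 1 1 (one_mul 1)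
  have id_of_idem : phiOne M * phiOne M = phiOne M → ∀ x : M, x * x = x := by
    intro hidem x
    have e1 := congrFun hidem [x, (1 : M)]
    have e2 : (phiOne M) [x, (1 : M)] = [x, x] := by
      rw [phiOne_apply_pair, mul_one]
    have e3 : (phiOne M * phiOne M) [x, (1 : M)] = (phiOne M) [x, x] := by
      show (phiOne M) ((phiOne M) [x, 1]) = _
      rw [e2]
    rw [e3, phiOne_apply_pair, e2] at e1
    have := List.tail_eq_of_cons_eq e1
    have := List.head_eq_of_cons_eq this
    exact this
  constructor
  · constructor
    · intro hidem
      exact ⟨phiOne M, hmem, by rw [hidem, hidem]⟩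
    · intro hreg
      exact idem_of_id (idem_of_regular haper hreg)
  · exact ⟨id_of_idem, idem_of_id⟩
end

section
/- Cayley(S × T) embeds into Cayley(S) × Cayley(T): the map sending ∏φ_{(s_i,t_i)} to (∏φ_{s_i}, ∏φ_{t_i}) is a well-defined injective semigroup homomorphism. -/
theorem List.map_scanl {α β : Type*} {op : α → α → α} {op' : β → β → β} {m : α → β}
    (hm : ∀ a b, m (op a b) = op' (m a) (m b)) (a : α) (l : List α) :
    (l.scanl op a).map m = (l.map m).scanl op' (m a) := by
  induction l generalizing a with
  | nil => rfl
  | cons x xs ih => simp [List.scanl_cons, ih, hm]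

theorem List.map_pair_injective {α β γ : Type*} {f : α → β} {g : α → γ}
    (h : Function.Injective fun a => (f a, g a)) :
    Function.Injective fun l : List α => (l.map f, l.map g) := by
  intro l l' e
  have ef : l.map f = l'.map f := congrArg Prod.fst e
  have eg : l.map g = l'.map g := congrArg Prod.snd e
  apply List.map_injective_iff.2 h
  rw [← List.zip_map', ← List.zip_map', ef, eg]

theorem semiconj_map_phi {M N F : Type*} [Mul M] [Mul N] [FunLike F M N] [MulHomClass F M N]
    (m : F) (a : M) :
    Function.Semiconj (List.map m) (phi a) (phi (m a)) := fun l => by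
  rw [phi, phi, List.map_tail, List.map_scanl (map_mul m)]

theorem WithOne.mapMulHom_surjective_s15 {U V : Type*} [Mul U] [Mul V] {π : U →ₙ* V}
    (hπ : Function.Surjective π) : Function.Surjective (WithOne.mapMulHom π) := by
  intro y
  induction y using WithOne.recOneCoe with
  | one => exact ⟨1, map_one _⟩
  | coe v =>
    obtain ⟨u, rfl⟩ := hπ v
    exact ⟨u, WithOne.mapMulHom_coe π u⟩

theorem WithOne.mapMulHom_pair_injective {U V₁ V₂ : Type*} [Mul U] [Mul V₁] [Mul V₂]
    {π₁ : U →ₙ* V₁} {π₂ : U →ₙ* V₂} (h : Function.Injective (π₁.prod π₂)) :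
    Function.Injective fun x => (WithOne.mapMulHom π₁ x, WithOne.mapMulHom π₂ x) := by
  intro x y e
  induction x using WithOne.recOneCoe <;> induction y using WithOne.recOneCoe
  · rfl
  · simp at e
  · simp at e
  · simp only [WithOne.mapMulHom_coe, Prod.ext_iff, WithOne.coe_inj] at e
    exact congrArg _ (h (Prod.ext e.1 e.2))

namespace Cayley

variable {U V V₁ V₂ : Type*} [Semigroup U] [Semigroup V] [Semigroup V₁] [Semigroup V₂]

instance [IsEmpty U] : IsEmpty (Cayley U) := by
  refine ⟨fun ⟨f, hf⟩ => ?_⟩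
  induction hf using Subsemigroup.closure_induction with
  | mem f hf => exact isEmptyElim hf.choose
  | mul _ _ _ _ ih => exact ih

theorem phi_mem (u : U) : phi (u : WithOne U) ∈ Cayley U :=
  Subsemigroup.subset_closure ⟨u, rfl⟩

theorem exists_semiconj (π : U →ₙ* V) {f : Function.End (List (WithOne U))} (hf : f ∈ Cayley U) :
    ∃ g ∈ Cayley V, Function.Semiconj (List.map (WithOne.mapMulHom π)) f g := by
  induction hf using Subsemigroup.closure_induction with
  | mem f hf =>
    obtain ⟨u, rfl⟩ := hf
    exact ⟨_, phi_mem (π u), semiconj_map_phi (WithOne.mapMulHom π) (u : WithOne U)⟩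
  | mul f f' _ _ ih ih' =>
    obtain ⟨g, hg, hfg⟩ := ih
    obtain ⟨g', hg', hfg'⟩ := ih'
    exact ⟨g * g', mul_mem hg hg', hfg.comp_right hfg'⟩

section Map

variable {π : U →ₙ* V} (hπ : Function.Surjective π)

/-- The unique `g` with `map π ∘ f = g ∘ map π`, read off through a section of `map π`. -/
noncomputable def descend (f : Function.End (List (WithOne U))) :
    Function.End (List (WithOne V)) :=
  List.map (WithOne.mapMulHom π) ∘ f ∘
    Function.surjInv (List.map_surjective_iff.2 (WithOne.mapMulHom_surjective_s15 hπ))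

theorem descend_eq_of_semiconj {f : Function.End (List (WithOne U))}
    {g : Function.End (List (WithOne V))}
    (h : Function.Semiconj (List.map (WithOne.mapMulHom π)) f g) : descend hπ f = g := by
  funext l
  exact (h _).trans (congrArg g (Function.surjInv_eq _ l))

noncomputable def map : Cayley U →ₙ* Cayley V where
  toFun f := ⟨descend hπ f, by
    obtain ⟨g, hg, hfg⟩ := exists_semiconj π f.2
    rwa [descend_eq_of_semiconj hπ hfg]⟩
  map_mul' f f' := by
    obtain ⟨g, -, hfg⟩ := exists_semiconj π f.2
    obtain ⟨g', -, hfg'⟩ := exists_semiconj π f'.2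
    ext1
    change descend hπ (f.1 * f'.1) = descend hπ f.1 * descend hπ f'.1
    rw [descend_eq_of_semiconj hπ hfg, descend_eq_of_semiconj hπ hfg']
    exact descend_eq_of_semiconj hπ (hfg.comp_right hfg')

theorem semiconj_map (f : Cayley U) :
    Function.Semiconj (List.map (WithOne.mapMulHom π)) f.1 (map hπ f).1 := by
  obtain ⟨g, -, hfg⟩ := exists_semiconj π f.2
  change Function.Semiconj _ _ (descend hπ f)
  rwa [descend_eq_of_semiconj hπ hfg]

theorem map_phi (u : U) : map hπ ⟨_, phi_mem u⟩ = ⟨_, phi_mem (π u)⟩ :=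
  Subtype.ext <| descend_eq_of_semiconj hπ (semiconj_map_phi _ _)

end Map

theorem map_prod_injective {π₁ : U →ₙ* V₁} {π₂ : U →ₙ* V₂} (h₁ : Function.Surjective π₁)
    (h₂ : Function.Surjective π₂) (h : Function.Injective (π₁.prod π₂)) :
    Function.Injective ((map h₁).prod (map h₂)) := by
  intro f f' e
  have e₁ : map h₁ f = map h₁ f' := congrArg Prod.fst e
  have e₂ : map h₂ f = map h₂ f' := congrArg Prod.snd e
  refine Subtype.ext (funext fun l => List.map_pair_injective
    (WithOne.mapMulHom_pair_injective h) (Prod.ext ?_ ?_))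
  · change (f.1 l).map _ = (f'.1 l).map _
    rw [semiconj_map h₁ f l, semiconj_map h₁ f' l, e₁]
  · change (f.1 l).map _ = (f'.1 l).map _
    rw [semiconj_map h₂ f l, semiconj_map h₂ f' l, e₂]

end Cayley

/-- Cayley(S × T) embeds into Cayley(S) × Cayley(T): the map sending
∏φ_{(sᵢ,tᵢ)} to (∏φ_{sᵢ}, ∏φ_{tᵢ}) is a well-defined injective semigroup
homomorphism. -/
theorem cayley_prod_embeds {S T : Type*} [Semigroup S] [Semigroup T] :
    ∃ Φ : Cayley (S × T) →ₙ* Cayley S × Cayley T, Function.Injective Φ ∧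
      ∀ (s : S) (t : T),
        Φ ⟨phi (((s, t) : S × T) : WithOne (S × T)),
            Subsemigroup.subset_closure ⟨(s, t), rfl⟩⟩ =
          (⟨phi (s : WithOne S), Subsemigroup.subset_closure ⟨s, rfl⟩⟩,
            ⟨phi (t : WithOne T), Subsemigroup.subset_closure ⟨t, rfl⟩⟩) := by
  rcases isEmpty_or_nonempty (S × T) with hST | ⟨s₀, t₀⟩
  · exact ⟨⟨isEmptyElim, isEmptyElim⟩, Function.injective_of_subsingleton _,
      fun s t => isEmptyElim (s, t)⟩
  have : Nonempty S := ⟨s₀⟩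
  have : Nonempty T := ⟨t₀⟩
  have hfst : Function.Surjective (MulHom.fst S T) := Prod.fst_surjective
  have hsnd : Function.Surjective (MulHom.snd S T) := Prod.snd_surjective
  refine ⟨(Cayley.map hfst).prod (Cayley.map hsnd),
    Cayley.map_prod_injective hfst hsnd fun _ _ => id, fun s t => ?_⟩
  exact Prod.ext (Cayley.map_phi hfst (s, t)) (Cayley.map_phi hsnd (s, t))
end

section
/- The memory multiplication on S × P(S), given by (s,α)·(t,β) = (st, αt ∪ {t} ∪ β), is associative; the resulting semigroup mem(S) surjects onto S via the first projection, and mem(S) is aperiodic if and only if S is. -/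
/-- `spow s n` is the (n+1)-st power of s in a semigroup. -/
def spow {S : Type*} [Semigroup S] (s : S) : ℕ → S
  | 0 => s
  | n + 1 => spow s n * s

/-- The memory multiplication (s,α)·(t,β) = (st, αt ∪ {t} ∪ β) on S × P(S). -/
def memMul {S : Type*} [Semigroup S] (p q : S × Set S) : S × Set S :=
  (p.1 * q.1, (fun x => x * q.1) '' p.2 ∪ {q.1} ∪ q.2)

/-- `mempow p n` is the (n+1)-st power of p in mem(S). -/
def mempow {S : Type*} [Semigroup S] (p : S × Set S) : ℕ → S × Set S
  | 0 => p
  | n + 1 => memMul (mempow p n) p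

lemma mempow_fst {S : Type*} [Semigroup S] (p : S × Set S) (n : ℕ) :
    (mempow p n).1 = spow p.1 n := by
  induction n with
  | zero => rfl
  | succ n ih => simp [mempow, memMul, spow, ih]

lemma spow_stable {S : Type*} [Semigroup S] (s : S) (m : ℕ)
    (h : spow s m = spow s (m + 1)) : ∀ k, spow s (m + k) = spow s m := by
  intro k
  induction k with
  | zero => rfl
  | succ k ih =>
    have : spow s (m + (k + 1)) = spow s (m + k) * s := rfl
    rw [this, ih, ← spow, ← h]

lemma mempow_snd_mono {S : Type*} [Semigroup S] (p : S × Set S) :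
    Monotone (fun n => (mempow p n).2) := by
  apply monotone_nat_of_le_succ
  intro n
  induction n with
  | zero =>
    show p.2 ⊆ (memMul p p).2
    simp only [memMul]
    exact fun x hx => Or.inr hx
  | succ n ih =>
    show (memMul (mempow p n) p).2 ⊆ (memMul (mempow p (n+1)) p).2
    simp only [memMul]
    intro x hx
    rcases hx with (h | h) | h
    · exact Or.inl (Or.inl (Set.image_mono ih h))
    · exact Or.inl (Or.inr h)
    · exact Or.inr h

/-- The memory multiplication is associative; the first projection is a
surjective morphism mem(S) → S; and mem(S) is aperiodic iff S is. -/
theorem memory_semigroup {S : Type*} [Semigroup S] [Fintype S] :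
    (∀ p q r : S × Set S, memMul (memMul p q) r = memMul p (memMul q r)) ∧
      (∀ p q : S × Set S, (memMul p q).1 = p.1 * q.1) ∧
      Function.Surjective (Prod.fst : S × Set S → S) ∧
      ((∀ p : S × Set S, ∃ n : ℕ, mempow p n = mempow p (n + 1)) ↔
        ∀ s : S, ∃ n : ℕ, spow s n = spow s (n + 1)) := by
  refine ⟨?_, fun p q => rfl, fun s => ⟨(s, ∅), rfl⟩, ?_, ?_⟩
  · intro p q r
    refine Prod.ext (mul_assoc _ _ _) ?_
    simp only [memMul, Set.image_union, Set.image_image, Set.image_singleton,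
      mul_assoc, Set.union_assoc]
  · -- mem aperiodic → S aperiodic
    intro h s
    obtain ⟨n, hn⟩ := h (s, ∅)
    refine ⟨n, ?_⟩
    have h1 := congrArg Prod.fst hn
    rwa [mempow_fst, mempow_fst] at h1
  · -- S aperiodic → mem aperiodic
    intro h p
    obtain ⟨m, hm⟩ := h p.1
    have hstab := spow_stable p.1 m hm
    have : ¬ Function.Injective (fun n => (mempow p (m + n)).2) :=
      not_injective_infinite_finite _
    rw [Function.not_injective_iff] at this
    obtain ⟨a, b, hab, hne⟩ := this
    -- wlog a < b
    have key : ∀ a b : ℕ, a < b → (mempow p (m + a)).2 = (mempow p (m + b)).2 →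
        ∃ n, mempow p n = mempow p (n + 1) := by
      intro a b hlt heq
      refine ⟨m + a, Prod.ext ?_ ?_⟩
      · rw [mempow_fst, mempow_fst]
        rw [hstab a, show m + a + 1 = m + (a + 1) from by ring, hstab (a + 1)]
      · apply le_antisymm
        · exact mempow_snd_mono p (Nat.le_succ _)
        · rw [show m + a + 1 = m + (a + 1) from rfl, heq]
          exact mempow_snd_mono p (by omega)
    rcases hne.lt_or_gt with hlt | hlt
    · exact key a b hlt hab
    · exact key b a hlt hab.symm
end

section
/- In a 0-simple semigroup, a product s_1 s_2 ⋯ s_n equals 0 if and only if some adjacent pair satisfies s_i s_{i+1} = 0. -/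
/-!
If `a * b ≠ 0`, then `b = s * (a * b) * t` because the ideal generated by `a * b` is all of `S`.
The elements `x ∈ S * a` with `x * b * t' = b` for some `t'` form a subsemigroup containing
`s * a`; in a finite semigroup it contains an idempotent `e`, and then `e * b = b`, so `b` is a
left multiple of `a * b`. Hence `a * b ≠ 0` and `b * c ≠ 0` force `a * b * c ≠ 0`, and a product
vanishes exactly when two adjacent factors do.
-/

open Set

theorem exists_idempotent_in_subsemigroup_of_finite {M : Type*} [Semigroup M] [Finite M]
    (s : Set M) (hs : s.Nonempty) (hmul : ∀ x ∈ s, ∀ y ∈ s, x * y ∈ s) : ∃ e ∈ s, e * e = e := by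
  let : TopologicalSpace M := ⊥
  have : DiscreteTopology M := ⟨rfl⟩
  exact exists_idempotent_in_compact_subsemigroup (fun _ => continuous_of_discreteTopology) s hs
    s.toFinite.isCompact hmul

theorem List.isChain_iff_forall_getD {α : Type*} {R : α → α → Prop} (l : List α) (d : α) :
    l.IsChain R ↔ ∀ i, i + 1 < l.length → R (l.getD i d) (l.getD (i + 1) d) := by
  rw [List.isChain_iff_getElem]
  refine forall_congr' fun i => forall_congr' fun hi => ?_
  rw [List.getD_eq_getElem _ _ (by omega), List.getD_eq_getElem _ _ hi]

section

variable {S : Type*} [SemigroupWithZero S]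

def IsTwoSidedIdeal (I : Set S) : Prop :=
  ∀ x ∈ I, ∀ s : S, s * x ∈ I ∧ x * s ∈ I

variable (S) in
def IsZeroSimple : Prop :=
  (∃ x y : S, x * y ≠ 0) ∧
    ∀ I : Set S, I.Nonempty → IsTwoSidedIdeal I → I = {0} ∨ I = univ

namespace IsZeroSimple

theorem eq_univ_of_mem (hS : IsZeroSimple S) {I : Set S} (hI : IsTwoSidedIdeal I) {x : S}
    (hx : x ∈ I) (hx0 : x ≠ 0) : I = univ :=
  (hS.2 I ⟨x, hx⟩ hI).resolve_left fun h => hx0 (by rwa [h] at hx)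

theorem exists_mul_eq (hS : IsZeroSimple S) (x : S) : ∃ u v : S, u * v = x := by
  obtain ⟨x₀, y₀, hxy⟩ := hS.1
  have hI : IsTwoSidedIdeal {x : S | ∃ u v : S, u * v = x} := by
    rintro _ ⟨u, v, rfl⟩ s
    exact ⟨⟨s * u, v, mul_assoc _ _ _⟩, ⟨u, v * s, (mul_assoc _ _ _).symm⟩⟩
  exact eq_univ_iff_forall.mp (hS.eq_univ_of_mem hI ⟨x₀, y₀, rfl⟩ hxy) x

theorem eq_zero_of_forall_mul_mul_eq_zero (hS : IsZeroSimple S) {x : S}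
    (hx : ∀ s t : S, s * x * t = 0) : x = 0 := by
  obtain ⟨x₀, y₀, hxy⟩ := hS.1
  have hI : IsTwoSidedIdeal {x : S | ∀ s t : S, s * x * t = 0} := by
    intro x hx s
    refine ⟨fun s' t' => ?_, fun s' t' => ?_⟩
    · simpa only [mul_assoc] using hx (s' * s) t'
    · simpa only [mul_assoc] using hx s' (s * t')
  rcases hS.2 _ ⟨0, fun s t => by simp⟩ hI with h | h
  · exact (h ▸ hx : x ∈ ({0} : Set S))
  · obtain ⟨p, q, rfl⟩ := hS.exists_mul_eq x₀
    have hq : q ∈ {x : S | ∀ s t : S, s * x * t = 0} := h ▸ mem_univ q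
    exact absurd (hq p y₀) hxy

theorem exists_mul_mul_eq (hS : IsZeroSimple S) {a : S} (ha : a ≠ 0) (x : S) :
    ∃ s t : S, s * a * t = x := by
  obtain ⟨s, t, hst⟩ : ∃ s t : S, s * a * t ≠ 0 := by
    by_contra! h
    exact ha (hS.eq_zero_of_forall_mul_mul_eq_zero h)
  have hI : IsTwoSidedIdeal {x : S | ∃ s t : S, s * a * t = x} := by
    rintro _ ⟨s, t, rfl⟩ r
    exact ⟨⟨r * s, t, by simp only [mul_assoc]⟩, ⟨s, t * r, by simp only [mul_assoc]⟩⟩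
  exact eq_univ_iff_forall.mp (hS.eq_univ_of_mem hI ⟨s, t, rfl⟩ hst) x

theorem exists_mul_eq_right_of_mul_ne_zero [Finite S] (hS : IsZeroSimple S) {a b : S}
    (hab : a * b ≠ 0) : ∃ u : S, u * (a * b) = b := by
  obtain ⟨s, t, hst⟩ := hS.exists_mul_mul_eq hab b
  let T : Set S := {x | (∃ v, v * a = x) ∧ ∃ t', x * b * t' = b}
  have hsa : s * a ∈ T := ⟨⟨s, rfl⟩, t, by simpa only [mul_assoc] using hst⟩
  have hT : ∀ x ∈ T, ∀ y ∈ T, x * y ∈ T := by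
    rintro x ⟨⟨v, rfl⟩, t₁, ht₁⟩ y ⟨⟨w, rfl⟩, t₂, ht₂⟩
    refine ⟨⟨v * a * w, by simp only [mul_assoc]⟩, t₂ * t₁, ?_⟩
    calc v * a * (w * a) * b * (t₂ * t₁) = v * a * (w * a * b * t₂) * t₁ := by
          simp only [mul_assoc]
      _ = b := by rw [ht₂, ht₁]
  obtain ⟨e, ⟨⟨v, rfl⟩, t', ht'⟩, he⟩ :=
    exists_idempotent_in_subsemigroup_of_finite T ⟨_, hsa⟩ hT
  refine ⟨v, ?_⟩
  calc v * (a * b) = v * a * (v * a * b * t') := by rw [ht', mul_assoc]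
    _ = v * a * b * t' := by simp only [← mul_assoc, he]
    _ = b := ht'

theorem mul_mul_ne_zero [Finite S] (hS : IsZeroSimple S) {a b c : S} (hab : a * b ≠ 0)
    (hbc : b * c ≠ 0) : a * b * c ≠ 0 := by
  obtain ⟨u, hu⟩ := hS.exists_mul_eq_right_of_mul_ne_zero hab
  intro habc
  apply hbc
  rw [← hu, mul_assoc, habc, mul_zero]

end IsZeroSimple

theorem foldl_mul_ne_zero_iff_isChain
    (hmul : ∀ a b c : S, a * b ≠ 0 → b * c ≠ 0 → a * b * c ≠ 0) (a b : S) (l : List S) :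
    (b :: l).foldl (· * ·) a ≠ 0 ↔ (a :: b :: l).IsChain (fun x y => x * y ≠ 0) := by
  induction l generalizing a b with
  | nil => simp
  | cons c l ih =>
    have key : a * b * c ≠ 0 ↔ a * b ≠ 0 ∧ b * c ≠ 0 :=
      ⟨fun h => ⟨fun hab => h (by rw [hab, zero_mul]),
        fun hbc => h (by rw [mul_assoc, hbc, mul_zero])⟩, fun h => hmul a b c h.1 h.2⟩
    rw [List.foldl_cons, ih, List.isChain_cons_cons, key, List.isChain_cons_cons,
      List.isChain_cons_cons, and_assoc]

end

/-- In a finite 0-simple semigroup, a product s₁s₂⋯sₙ (n ≥ 2) equals 0 if and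
only if some adjacent pair satisfies sᵢs_{i+1} = 0.  Here the word is
`a :: b :: l` and its product is `(b :: l).foldl (· * ·) a`. -/
theorem zero_simple_product_eq_zero_iff {S : Type*} [SemigroupWithZero S] [Fintype S]
    (hS2 : ∃ x y : S, x * y ≠ 0)
    (h0simple : ∀ I : Set S, I.Nonempty →
      (∀ x ∈ I, ∀ s : S, s * x ∈ I ∧ x * s ∈ I) → I = {0} ∨ I = Set.univ)
    (a b : S) (l : List S) :
    (b :: l).foldl (· * ·) a = 0 ↔
      ∃ i : ℕ, i + 1 < (a :: b :: l).length ∧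
        (a :: b :: l).getD i 0 * (a :: b :: l).getD (i + 1) 0 = 0 := by
  have hS : IsZeroSimple S := ⟨hS2, h0simple⟩
  rw [← not_iff_not, ← ne_eq,
    foldl_mul_ne_zero_iff_isChain (fun _ _ _ => hS.mul_mul_ne_zero) a b l,
    List.isChain_iff_forall_getD _ 0]
  simp only [not_exists, not_and, ne_eq]
end
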